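/- arXiv:math/0504514 — 3 statements merged into one kernel-verified Lean document; each statement's English description precedes it below -/
import Mathlib

section
/- Uniqueness of the maximizing projection direction at elliptical models: under the stated elliptical model, for every x ≠ θ the supremum over unit vectors u of (u'x − Med(F_u))/MAD(F_u) is attained at the unique unit vector u(x) = Σ^{−1}(x − θ)/‖Σ^{−1}(x − θ)‖, and at no other unit vector; moreover MAD(F_{u(x)}) = m_0 ‖Σ^{−1/2}(x − θ)‖ / ‖Σ^{−1}(x − θ)‖. -/
open MeasureTheory ProbabilityTheory Matrix Filter Topology Set ENNReal NNReal

noncomputable section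

namespace DWS

/-- ℝ^d with the Euclidean norm. -/
abbrev Vec (d : ℕ) := EuclideanSpace ℝ (Fin d)

/-- d × d real matrices. -/
abbrev Mat (d : ℕ) := Matrix (Fin d) (Fin d) ℝ

variable {d : ℕ}

/-- The Euclidean inner product `u'x`. -/
def ip (u x : Vec d) : ℝ := inner ℝ u x

/-- Median of a distribution on ℝ : `Med(G) = inf {t : G(-∞,t] ≥ 1/2}`. -/
def med (G : Measure ℝ) : ℝ := sInf {t : ℝ | (1 : ℝ≥0∞) / 2 ≤ G (Set.Iic t)}

/-- Median absolute deviation. -/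
def mad (G : Measure ℝ) : ℝ := med (G.map fun w => |w - med G|)

/-- Law of `u'X` for `X ~ F`. -/
def proj (F : Measure (Vec d)) (u : Vec d) : Measure ℝ := F.map fun x => (ip u x)

/-- The unit sphere of ℝ^d, as a type. -/
def sph (d : ℕ) := {u : Vec d // ‖u‖ = 1}

/-- Generalized (μ,σ)-outlyingness. -/
def outlyG (μl σl : Measure ℝ → ℝ) (F : Measure (Vec d)) (x : Vec d) : ℝ :=
  ⨆ u : sph d, ((ip u.1 x) - μl (proj F u.1)) / σl (proj F u.1)

/-- Generalized projection depth based on location `μl` and scale `σl`. -/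
def pdG (μl σl : Measure ℝ → ℝ) (F : Measure (Vec d)) (x : Vec d) : ℝ :=
  1 / (1 + outlyG μl σl F x)

/-- (Med, MAD)-outlyingness. -/
def outly (F : Measure (Vec d)) (x : Vec d) : ℝ := outlyG med mad F x

/-- Projection depth with (μ, σ) = (Med, MAD). -/
def pd (F : Measure (Vec d)) (x : Vec d) : ℝ := 1 / (1 + outly F x)

/-- Depth weighted mean `L(F)`. -/
def wMean (w1 : ℝ → ℝ) (D : Vec d → Measure (Vec d) → ℝ) (F : Measure (Vec d)) : Vec d :=
  (∫ x, w1 (D x F) ∂F)⁻¹ • ∫ x, w1 (D x F) • x ∂F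

/-- Depth weighted scatter matrix `S(F)` (entrywise integrals). -/
def wScatter (w1 w2 : ℝ → ℝ) (D : Vec d → Measure (Vec d) → ℝ) (F : Measure (Vec d)) : Mat d :=
  fun i j => (∫ x, w2 (D x F) ∂F)⁻¹ *
    ∫ x, w2 (D x F) * ((x - wMean w1 D F) i * (x - wMean w1 D F) j) ∂F

/-- Projection depth weighted mean. -/
def PWM (w1 : ℝ → ℝ) (F : Measure (Vec d)) : Vec d := wMean w1 (fun x G => pd G x) F

/-- Projection depth weighted scatter matrix. -/
def PWS (w1 w2 : ℝ → ℝ) (F : Measure (Vec d)) : Mat d :=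
  wScatter w1 w2 (fun x G => pd G x) F

/-- Outer product `v w'` as a matrix. -/
def outerM (v w : Vec d) : Mat d := fun i j => v i * w j

/-- Apply a matrix to a Euclidean vector. -/
def mApp (A : Mat d) (x : Vec d) : Vec d := WithLp.toLp 2 (A.mulVec x : Fin d → ℝ)

/-- Frobenius norm of a matrix. -/
def mnorm (M : Mat d) : ℝ := Real.sqrt (∑ i, ∑ j, (M i j) ^ 2)

/-- Spectral (operator) norm of a matrix. -/
def specNorm (M : Mat d) : ℝ :=
  ‖LinearMap.toContinuousLinearMap (Matrix.toEuclideanLin M)‖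

/-- Quadratic form `u'Au`. -/
def qf (A : Mat d) (u : Vec d) : ℝ := ∑ i, ∑ j, u i * A i j * u j

/-- Middle value (median) of three reals. -/
def mid3 (a b c : ℝ) : ℝ := max (min a b) (min (max a b) c)

/-- `j`-th coordinate of a vector (junk value 0 out of range). -/
def coord (x : Vec d) (j : ℕ) : ℝ := if h : j < d then x ⟨j, h⟩ else 0

/-- The contaminated distribution `(1-ε)F + εG`. -/
def contam (F : Measure (Vec d)) (ε : ℝ) (G : Measure (Vec d)) : Measure (Vec d) :=
  ENNReal.ofReal (1 - ε) • F + ENNReal.ofReal ε • G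

/-- One-dimensional point-mass contamination `(1-ε)G + εδ_t`. -/
def contam1 (G : Measure ℝ) (ε : ℝ) (t : ℝ) : Measure ℝ :=
  ENNReal.ofReal (1 - ε) • G + ENNReal.ofReal ε • Measure.dirac t

/-- Empirical measure of the first `n` observations. -/
def empMeas {Ω : Type*} (X : ℕ → Ω → Vec d) (n : ℕ) (ω : Ω) : Measure (Vec d) :=
  (n : ℝ≥0∞)⁻¹ • ∑ i ∈ Finset.range n, Measure.dirac (X i ω)

/-- `X_0, X_1, …` is an i.i.d. sample from `F`. -/
def IsIIDFrom {Ω : Type*} [MeasurableSpace Ω] (P : Measure Ω) (X : ℕ → Ω → Vec d)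
    (F : Measure (Vec d)) : Prop :=
  (∀ i, Measurable (X i)) ∧ iIndepFun X P ∧ ∀ i, P.map (X i) = F

/-- `R_n = O_p(a_n)`. -/
def IsOp {Ω : Type*} [MeasurableSpace Ω] (P : Measure Ω) (R : ℕ → Ω → ℝ) (a : ℕ → ℝ) : Prop :=
  ∀ δ : ℝ, 0 < δ → ∃ M : ℝ,
    Filter.limsup (fun n => P {ω | M * a n < |R n ω|}) Filter.atTop < ENNReal.ofReal δ

/-- `R_n = o_p(a_n)`. -/
def IsLittleOp {Ω : Type*} [MeasurableSpace Ω] (P : Measure Ω) (R : ℕ → Ω → ℝ) (a : ℕ → ℝ) :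
    Prop :=
  ∀ η : ℝ, 0 < η → Tendsto (fun n => P {ω | η * a n < |R n ω|}) atTop (𝓝 0)

/-- Convergence in distribution (weak convergence of the laws). -/
def TendstoInDist {Ω E : Type*} [MeasurableSpace Ω] [MeasurableSpace E] [TopologicalSpace E]
    (P : Measure Ω) (V : ℕ → Ω → E) (μ : Measure E) : Prop :=
  ∀ f : BoundedContinuousFunction E ℝ,
    Tendsto (fun n => ∫ ω, f (V n ω) ∂P) atTop (𝓝 (∫ x, f x ∂μ))

/-- `μ` is the centered Gaussian distribution with covariance matrix `V`
(characterized through its one-dimensional projections). -/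
def IsCenteredGaussian {ι : Type*} [Fintype ι] (μ : Measure (EuclideanSpace ℝ ι))
    (V : Matrix ι ι ℝ) : Prop :=
  IsProbabilityMeasure μ ∧
    ∀ a : EuclideanSpace ℝ ι,
      μ.map (fun x => (inner ℝ a x : ℝ)) =
        gaussianReal 0 (Real.toNNReal (∑ i, ∑ j, a i * V i j * a j))

/-- Column-stacking `vec` operator (indexed by pairs). -/
def vecm (M : Mat d) : EuclideanSpace ℝ (Fin d × Fin d) :=
  WithLp.toLp 2 (fun p : Fin d × Fin d => M p.2 p.1)

/-- The `d² × d²` commutation matrix `K_{d,d}`, satisfying `K vec(A) = vec(Aᵀ)`. -/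
def commMat (d : ℕ) : Matrix (Fin d × Fin d) (Fin d × Fin d) ℝ :=
  fun p q => if p.1 = q.2 ∧ p.2 = q.1 then 1 else 0

/-- Kronecker product `A ⊗ B` indexed by pairs. -/
def kron (A B : Mat d) : Matrix (Fin d × Fin d) (Fin d × Fin d) ℝ :=
  fun p q => A p.1 q.1 * B p.2 q.2

/-- The law of the standardized vector `Z = Σ^{-1/2}(X - θ)`; `Rsq` stands for `Σ^{1/2}`. -/
def stdLaw (F : Measure (Vec d)) (θ : Vec d) (Rsq : Mat d) : Measure (Vec d) :=
  F.map fun x => mApp Rsq⁻¹ (x - θ)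

/-- `s_0(x) = 1/(1 + x/m₀)`. -/
def s0 (m0 x : ℝ) : ℝ := 1 / (1 + x / m0)

/-- `s_i(x) = E(U₁^{2(i-1)} sign(|U₁|x - m₀))`, `U₁` the first coordinate of `Z/‖Z‖`. -/
def sfun (F0 : Measure (Vec d)) (m0 : ℝ) (i : ℕ) (x : ℝ) : ℝ :=
  ∫ z, (coord z 0 / ‖z‖) ^ (2 * (i - 1)) * Real.sign (|coord z 0 / ‖z‖| * x - m0) ∂F0

/-- `c₀ = E w₂(s₀(‖Z‖))`. -/
def c0v (F0 : Measure (Vec d)) (w2 : ℝ → ℝ) (m0 : ℝ) : ℝ := ∫ z, w2 (s0 m0 ‖z‖) ∂F0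

/-- `c₁ = E(‖Z‖² w₂(s₀(‖Z‖)))/(d c₀)`. -/
def c1v (F0 : Measure (Vec d)) (w2 : ℝ → ℝ) (m0 : ℝ) (d' : ℕ) : ℝ :=
  (∫ z, ‖z‖ ^ 2 * w2 (s0 m0 ‖z‖) ∂F0) / (d' * c0v F0 w2 m0)

/-- `c_j = E(‖Z‖^{2j-3} s₀²(‖Z‖) w₂'(s₀(‖Z‖)))/(4 m₀² p(m₀))` for `j = 2, 3`. -/
def cjv (F0 : Measure (Vec d)) (w2' : ℝ → ℝ) (m0 pm0 : ℝ) (j : ℕ) : ℝ :=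
  (∫ z, ‖z‖ ^ (2 * j - 3) * (s0 m0 ‖z‖) ^ 2 * w2' (s0 m0 ‖z‖) ∂F0) / (4 * m0 ^ 2 * pm0)

/-- `(s₁(x) - s₂(x))/(d-1)`, interpreted as 0 when `d = 1`. -/
def qterm (d' : ℕ) (F0 : Measure (Vec d)) (m0 x : ℝ) : ℝ :=
  if d' = 1 then 0 else (sfun F0 m0 1 x - sfun F0 m0 2 x) / ((d' : ℝ) - 1)

/-- `t₁(x) = c₃(s₂(x) - (s₁(x)-s₂(x))/(d-1)) + x² w₂(s₀(x))`. -/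
def t1v (d' : ℕ) (F0 : Measure (Vec d)) (w2 w2' : ℝ → ℝ) (m0 pm0 x : ℝ) : ℝ :=
  cjv F0 w2' m0 pm0 3 * (sfun F0 m0 2 x - qterm d' F0 m0 x) + x ^ 2 * w2 (s0 m0 x)

/-- `t₂(x) = c₃(s₁(x)-s₂(x))/(d-1) - c₁c₂s₁(x) - c₁w₂(s₀(x))`. -/
def t2v (d' : ℕ) (F0 : Measure (Vec d)) (w2 w2' : ℝ → ℝ) (m0 pm0 x : ℝ) : ℝ :=
  cjv F0 w2' m0 pm0 3 * qterm d' F0 m0 x - c1v F0 w2 m0 d' * cjv F0 w2' m0 pm0 2 * sfun F0 m0 1 x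
    - c1v F0 w2 m0 d' * w2 (s0 m0 x)



/-! ### Auxiliary lemmas -/

section Aux

variable {d : ℕ}

lemma ip_eq_sum (u v : Vec d) : ip u v = ∑ i, u i * v i := by
  simp [ip, PiLp.inner_apply, RCLike.inner_apply, mul_comm]

lemma ip_comm (u v : Vec d) : ip u v = ip v u := real_inner_comm v u

lemma mApp_apply (A : Mat d) (x : Vec d) (i : Fin d) : mApp A x i = ∑ j, A i j * x j := by
  simp [mApp, Matrix.mulVec, dotProduct]

lemma ip_mApp_left (A : Mat d) (u w : Vec d) : ip (mApp A u) w = ip u (mApp Aᵀ w) := by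
  simp only [ip_eq_sum, mApp_apply, Finset.sum_mul, Finset.mul_sum, Matrix.transpose_apply]
  rw [Finset.sum_comm]
  exact Finset.sum_congr rfl fun i _ => Finset.sum_congr rfl fun j _ => by ring

lemma ip_mApp_right (A : Mat d) (u w : Vec d) : ip u (mApp A w) = ip (mApp Aᵀ u) w := by
  rw [ip_mApp_left, Matrix.transpose_transpose]

lemma qf_eq_ip (A : Mat d) (u : Vec d) : qf A u = ip u (mApp A u) := by
  simp only [qf, ip_eq_sum, mApp_apply, Finset.mul_sum]
  exact Finset.sum_congr rfl fun i _ => Finset.sum_congr rfl fun j _ => by ring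

lemma mApp_mul (A B : Mat d) (x : Vec d) : mApp (A * B) x = mApp A (mApp B x) := by
  ext i
  simp [mApp, Matrix.mulVec_mulVec]

lemma mApp_zero (A : Mat d) : mApp A (0 : Vec d) = 0 := by
  ext i
  simp [mApp_apply]

lemma mApp_one (x : Vec d) : mApp 1 x = x := by
  ext i
  simp [mApp]

lemma mApp_smul (A : Mat d) (c : ℝ) (x : Vec d) : mApp A (c • x) = c • mApp A x := by
  ext i
  simp only [mApp_apply, PiLp.smul_apply, smul_eq_mul, Finset.mul_sum]
  exact Finset.sum_congr rfl fun j _ => by ring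

lemma ip_self (u : Vec d) : ip u u = ‖u‖ ^ 2 := real_inner_self_eq_norm_sq u

lemma medSet_nonempty (G : Measure ℝ) [IsProbabilityMeasure G] :
    {t : ℝ | (1:ℝ≥0∞)/2 ≤ G (Iic t)}.Nonempty := by
  have h := tendsto_measure_Iic_atTop (μ := G)
  rw [measure_univ] at h
  have h2 : ∀ᶠ t : ℝ in atTop, (1:ℝ≥0∞)/2 < G (Iic t) :=
    h.eventually_const_lt (by norm_num)
  obtain ⟨t, ht⟩ := h2.exists
  exact ⟨t, ht.le⟩

lemma medSet_bddBelow (G : Measure ℝ) [IsProbabilityMeasure G] :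
    BddBelow {t : ℝ | (1:ℝ≥0∞)/2 ≤ G (Iic t)} := by
  have h : Tendsto (fun n : ℕ => G (Iic (-(n:ℝ)))) atTop (𝓝 (G (⋂ n : ℕ, Iic (-(n:ℝ))))) := by
    have := tendsto_measure_iInter_atTop (μ := G) (s := fun n : ℕ => Iic (-(n:ℝ)))
      (fun n => measurableSet_Iic.nullMeasurableSet)
      (fun i j hij => Iic_subset_Iic.mpr (by exact_mod_cast neg_le_neg (by exact_mod_cast hij)))
      ⟨0, measure_ne_top _ _⟩
    exact this
  have hempty : (⋂ n : ℕ, Iic (-(n:ℝ))) = ∅ := by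
    ext x
    simp only [mem_iInter, mem_Iic, mem_empty_iff_false, iff_false, not_forall, not_le]
    obtain ⟨n, hn⟩ := exists_nat_gt (-x)
    exact ⟨n, by linarith⟩
  rw [hempty, measure_empty] at h
  obtain ⟨n, hn⟩ := (h.eventually_lt_const (show (0:ℝ≥0∞) < 1/2 by norm_num)).exists
  refine ⟨-(n:ℝ), fun t ht => ?_⟩
  by_contra hlt
  push_neg at hlt
  exact absurd (le_trans ht (measure_mono (Iic_subset_Iic.mpr hlt.le))) (not_le.mpr hn)

lemma map_affine_Iic (ν : Measure ℝ) (c a : ℝ) (hc : 0 < c) (t : ℝ) :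
    (ν.map (fun y => c * y + a)) (Iic t) = ν (Iic ((t - a)/c)) := by
  rw [Measure.map_apply (by fun_prop) measurableSet_Iic]
  congr 1
  ext y
  simp only [mem_preimage, mem_Iic]
  rw [le_div_iff₀' hc]
  constructor <;> intro <;> linarith

lemma med_map_affine (ν : Measure ℝ) [IsProbabilityMeasure ν] (c a : ℝ) (hc : 0 < c) :
    med (ν.map (fun y => c * y + a)) = c * med ν + a := by
  set S := {t : ℝ | (1:ℝ≥0∞)/2 ≤ ν (Iic t)} with hS
  have hne := medSet_nonempty ν
  have hbd := medSet_bddBelow ν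
  have hglb : IsGLB S (sInf S) := isGLB_csInf hne hbd
  have hmem : ∀ t : ℝ, ((1:ℝ≥0∞)/2 ≤ (ν.map (fun y => c*y+a)) (Iic t)) ↔ (t - a)/c ∈ S := by
    intro t; rw [map_affine_Iic ν c a hc]; rfl
  have hglb' : IsGLB {t : ℝ | (1:ℝ≥0∞)/2 ≤ (ν.map (fun y => c*y+a)) (Iic t)} (c * sInf S + a) := by
    constructor
    · intro t ht
      have h1 : (t - a)/c ∈ S := (hmem t).1 ht
      have h2 : sInf S ≤ (t - a)/c := hglb.1 h1
      have h3 := mul_le_mul_of_nonneg_left h2 hc.le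
      rw [mul_div_cancel₀ _ hc.ne'] at h3
      linarith
    · intro b hb
      have hlow : (b - a)/c ∈ lowerBounds S := by
        intro s hs
        have hmem2 : c * s + a ∈ {t : ℝ | (1:ℝ≥0∞)/2 ≤ (ν.map (fun y => c*y+a)) (Iic t)} := by
          refine (hmem (c*s+a)).2 ?_
          rw [show (c*s+a-a)/c = s by field_simp; ring]
          exact hs
        have := hb hmem2
        rw [div_le_iff₀ hc]
        linarith [this]
      have h4 := hglb.2 hlow
      rw [div_le_iff₀ hc] at h4
      linarith
  have hne' : {t : ℝ | (1:ℝ≥0∞)/2 ≤ (ν.map (fun y => c*y+a)) (Iic t)}.Nonempty := by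
    obtain ⟨s, hs⟩ := hne
    exact ⟨c * s + a, (hmem (c*s+a)).2 (by rw [show (c*s+a-a)/c = s by field_simp; ring]; exact hs)⟩
  rw [med, med, hglb'.csInf_eq hne']

lemma mad_map_affine (ν : Measure ℝ) [IsProbabilityMeasure ν] (c a : ℝ) (hc : 0 < c) :
    mad (ν.map (fun y => c * y + a)) = c * mad ν := by
  have hmeas1 : Measurable fun y : ℝ => c * y + a := by fun_prop
  have hmed := med_map_affine ν c a hc
  rw [mad, hmed]
  rw [Measure.map_map (by fun_prop) hmeas1]
  have hfun : ((fun w => |w - (c * med ν + a)|) ∘ fun y => c * y + a)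
      = (fun z => c * z + 0) ∘ fun y => |y - med ν| := by
    funext y
    simp only [Function.comp_apply, add_zero]
    rw [show c * y + a - (c * med ν + a) = c * (y - med ν) by ring, abs_mul, abs_of_pos hc]
  rw [hfun, ← Measure.map_map (by fun_prop : Measurable fun z : ℝ => c * z + 0) (by fun_prop)]
  haveI : IsProbabilityMeasure (ν.map fun y => |y - med ν|) :=
    Measure.isProbabilityMeasure_map (by fun_prop)
  rw [med_map_affine _ c 0 hc, mad, add_zero]

lemma noAtoms_of_density (ν : Measure ℝ) (p : ℝ → ℝ)
    (hdens : ν = (volume : Measure ℝ).withDensity fun y => ENNReal.ofReal (p y)) (x : ℝ) :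
    ν {x} = 0 := by
  rw [hdens, withDensity_apply _ (measurableSet_singleton x)]
  exact setLIntegral_measure_zero _ _ (by simp)

lemma mad_pos (ν : Measure ℝ) [IsProbabilityMeasure ν] (h0 : ∀ x : ℝ, ν {x} = 0) :
    0 < mad ν := by
  set m := med ν with hm
  have hmeas : Measurable fun w : ℝ => |w - m| := by fun_prop
  set G := ν.map fun w : ℝ => |w - m| with hG
  haveI : IsProbabilityMeasure G := Measure.isProbabilityMeasure_map hmeas.aemeasurable
  have happ : ∀ t : ℝ, G (Iic t) = ν (Icc (m - t) (m + t)) := by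
    intro t
    rw [hG, Measure.map_apply hmeas measurableSet_Iic]
    congr 1
    ext y
    simp only [mem_preimage, mem_Iic, mem_Icc, abs_le]
    constructor <;> intro h <;> constructor <;> linarith [h.1, h.2]
  have hshrink : Tendsto (fun n : ℕ => ν (Icc (m - 1/((n:ℝ)+1)) (m + 1/((n:ℝ)+1)))) atTop
      (𝓝 (ν (⋂ n : ℕ, Icc (m - 1/((n:ℝ)+1)) (m + 1/((n:ℝ)+1))))) := by
    refine tendsto_measure_iInter_atTop (fun n => measurableSet_Icc.nullMeasurableSet)
      (fun i j hij => ?_) ⟨0, measure_ne_top _ _⟩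
    have h1 : 1/((j:ℝ)+1) ≤ 1/((i:ℝ)+1) :=
      one_div_le_one_div_of_le (by positivity)
        (by have := (Nat.cast_le (α := ℝ)).mpr hij; linarith)
    exact Icc_subset_Icc (by linarith) (by linarith)
  have hinter : (⋂ n : ℕ, Icc (m - 1/((n:ℝ)+1)) (m + 1/((n:ℝ)+1))) = {m} := by
    ext x
    simp only [mem_iInter, mem_Icc, mem_singleton_iff]
    constructor
    · intro h
      by_contra hne
      have habs : 0 < |x - m| := abs_pos.mpr (sub_ne_zero.mpr hne)
      obtain ⟨n, hn⟩ := exists_nat_one_div_lt habs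
      have h1 := (h n).1
      have h2 := (h n).2
      have hxa : |x - m| ≤ 1/((n:ℝ)+1) := abs_le.mpr ⟨by linarith, by linarith⟩
      exact absurd hxa (not_le.mpr hn)
    · rintro rfl
      exact fun n => ⟨by simp [le_of_lt]; positivity, by simp [le_of_lt]; positivity⟩
  rw [hinter, h0 m] at hshrink
  obtain ⟨n, hn⟩ := (hshrink.eventually_lt_const (show (0:ℝ≥0∞) < 1/2 by norm_num)).exists
  set t0 : ℝ := 1/((n:ℝ)+1) with ht0def
  have ht0 : 0 < t0 := by positivity
  have hlb : t0 ∈ lowerBounds {t : ℝ | (1:ℝ≥0∞)/2 ≤ G (Iic t)} := by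
    intro t ht
    by_contra hlt
    push_neg at hlt
    have hmono : G (Iic t) ≤ G (Iic t0) := measure_mono (Iic_subset_Iic.mpr hlt.le)
    rw [happ t0] at hmono
    exact absurd (le_trans ht hmono) (not_le.mpr hn)
  have hle : t0 ≤ sInf {t : ℝ | (1:ℝ≥0∞)/2 ≤ G (Iic t)} :=
    le_csInf (medSet_nonempty G) hlb
  calc (0:ℝ) < t0 := ht0
    _ ≤ _ := hle

end Aux


/-- Uniqueness of the maximizing projection direction at elliptical
models. -/
theorem unique_maximizing_direction_elliptical {d : ℕ}
    (hd : 0 < d) (θ : Vec d) (Sig Rsq : Mat d)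
    (hSig : Sig.PosDef) (hRsq : Rsq.PosDef) (hRR : Rsq * Rsq = Sig)
    (ν : Measure ℝ) [IsProbabilityMeasure ν]
    (hνsym : ν.map (fun y => -y) = ν)
    (m0 : ℝ) (hm0 : mad ν = m0)
    (p : ℝ → ℝ) (hpc : Continuous p)
    (hdens : ν = (volume : Measure ℝ).withDensity fun y => ENNReal.ofReal (p y))
    (hppos : 0 < p 0 * p m0)
    (F : Measure (Vec d)) [IsProbabilityMeasure F]
    (hell : ∀ u : Vec d, ‖u‖ = 1 →
      F.map (fun x => ip u (x - θ)) = ν.map (fun y => Real.sqrt (qf Sig u) * y))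
 :
    ∀ x : Vec d, x ≠ θ →
      ∀ ux : Vec d, ux = ‖mApp Sig⁻¹ (x - θ)‖⁻¹ • mApp Sig⁻¹ (x - θ) →
        ‖ux‖ = 1
        ∧ (ip ux x - med (proj F ux)) / mad (proj F ux) = outly F x
        ∧ (∀ u : Vec d, ‖u‖ = 1 →
            (ip u x - med (proj F u)) / mad (proj F u) = outly F x → u = ux)
        ∧ mad (proj F ux) = m0 * ‖mApp Rsq⁻¹ (x - θ)‖ / ‖mApp Sig⁻¹ (x - θ)‖ := by
  classical
  intro x hx ux hux
  set v : Vec d := x - θ with hv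
  have hvne : v ≠ 0 := sub_ne_zero.mpr hx
  have hRdet : IsUnit Rsq.det := (Matrix.isUnit_iff_isUnit_det Rsq).mp hRsq.isUnit
  have hRinvR : Rsq⁻¹ * Rsq = 1 := Matrix.nonsing_inv_mul Rsq hRdet
  have hRRinv : Rsq * Rsq⁻¹ = 1 := Matrix.mul_nonsing_inv Rsq hRdet
  have hSinv : Sig⁻¹ = Rsq⁻¹ * Rsq⁻¹ := by rw [← hRR, Matrix.mul_inv_rev]
  have hRsym : Rsqᵀ = Rsq := by
    have h := hRsq.1
    rwa [Matrix.IsHermitian, Matrix.conjTranspose_eq_transpose_of_trivial] at h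
  set r : Vec d := mApp Rsq⁻¹ v with hr
  set w : Vec d := mApp Sig⁻¹ v with hw
  have hwr : w = mApp Rsq⁻¹ r := by rw [hw, hSinv, mApp_mul]
  have hRr : mApp Rsq r = v := by rw [hr, ← mApp_mul, hRRinv, mApp_one]
  have hRw : mApp Rsq w = r := by rw [hwr, ← mApp_mul, hRRinv, mApp_one]
  have hrne : r ≠ 0 := by
    intro h
    exact hvne (by rw [← hRr, h, mApp_zero])
  have hrpos : 0 < ‖r‖ := norm_pos_iff.mpr hrne
  have hwne : w ≠ 0 := by
    intro h
    exact hrne (by rw [← hRw, h, mApp_zero])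
  have hwpos : 0 < ‖w‖ := norm_pos_iff.mpr hwne
  have hinj : ∀ u : Vec d, u ≠ 0 → mApp Rsq u ≠ 0 := by
    intro u hu h
    apply hu
    have h2 : mApp Rsq⁻¹ (mApp Rsq u) = u := by rw [← mApp_mul, hRinvR, mApp_one]
    rw [← h2, h, mApp_zero]
  have hqf : ∀ u : Vec d, Real.sqrt (qf Sig u) = ‖mApp Rsq u‖ := by
    intro u
    rw [qf_eq_ip, ← hRR, mApp_mul, ip_mApp_right, hRsym, ip_self,
      Real.sqrt_sq (norm_nonneg _)]
  have hm0pos : 0 < m0 := by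
    rw [← hm0]
    exact mad_pos ν (noAtoms_of_density ν p hdens)
  have hcpos : ∀ u : Vec d, ‖u‖ = 1 → 0 < ‖mApp Rsq u‖ := by
    intro u hu
    refine norm_pos_iff.mpr (hinj u ?_)
    intro h
    rw [h] at hu
    simp at hu
  have hproj : ∀ u : Vec d, ‖u‖ = 1 →
      proj F u = ν.map (fun y => ‖mApp Rsq u‖ * y + ip u θ) := by
    intro u hu
    have hcont : Continuous fun xx : Vec d => ip u (xx - θ) := by
      show Continuous fun xx : Vec d => (inner ℝ u (xx - θ) : ℝ)
      exact continuous_const.inner (continuous_id.sub continuous_const)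
    have hsplit : (fun xx : Vec d => ip u xx)
        = (fun y : ℝ => y + ip u θ) ∘ fun xx : Vec d => ip u (xx - θ) := by
      funext xx
      simp [ip, Function.comp, inner_sub_right]
    rw [proj, hsplit, ← Measure.map_map (by fun_prop) hcont.measurable, hell u hu,
      Measure.map_map (by fun_prop) (by fun_prop)]
    congr 1
    funext y
    simp [Function.comp, hqf u]
  have hmed : ∀ u : Vec d, ‖u‖ = 1 → med (proj F u) = ‖mApp Rsq u‖ * med ν + ip u θ := by
    intro u hu
    rw [hproj u hu, med_map_affine ν _ _ (hcpos u hu)]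
  have hmad : ∀ u : Vec d, ‖u‖ = 1 → mad (proj F u) = ‖mApp Rsq u‖ * m0 := by
    intro u hu
    rw [hproj u hu, mad_map_affine ν _ _ (hcpos u hu), hm0]
  have hipx : ∀ u : Vec d, ip u x = ip u v + ip u θ := by
    intro u
    rw [hv]
    simp [ip, inner_sub_right]
  have key : ∀ u : Vec d, ‖u‖ = 1 →
      (ip u x - med (proj F u)) / mad (proj F u)
        = (ip u v / ‖mApp Rsq u‖ - med ν) / m0 := by
    intro u hu
    rw [hmed u hu, hmad u hu, hipx u]
    have hc := hcpos u hu
    field_simp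
    try ring
  have hCS : ∀ u : Vec d, ip u v = ip (mApp Rsq u) r := by
    intro u
    rw [← hRr, ip_mApp_right, hRsym]
  have hbound : ∀ u : Vec d, ‖u‖ = 1 → ip u v / ‖mApp Rsq u‖ ≤ ‖r‖ := by
    intro u hu
    rw [div_le_iff₀ (hcpos u hu), hCS u]
    calc ip (mApp Rsq u) r ≤ ‖mApp Rsq u‖ * ‖r‖ := real_inner_le_norm _ _
      _ = ‖r‖ * ‖mApp Rsq u‖ := mul_comm _ _
  subst hux
  have huxnorm : ‖(‖w‖⁻¹ • w : Vec d)‖ = 1 := by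
    rw [norm_smul, norm_inv, norm_norm, inv_mul_cancel₀ hwpos.ne']
  have hRux : mApp Rsq (‖w‖⁻¹ • w) = ‖w‖⁻¹ • r := by rw [mApp_smul, hRw]
  have hnux : ‖mApp Rsq ((‖w‖ : ℝ)⁻¹ • w)‖ = ‖w‖⁻¹ * ‖r‖ := by
    rw [hRux, norm_smul, norm_inv, norm_norm]
  have hipux : ip (‖w‖⁻¹ • w) v = ‖w‖⁻¹ * ‖r‖ ^ 2 := by
    rw [hCS, hRux]
    show (inner ℝ ((‖w‖ : ℝ)⁻¹ • r) r : ℝ) = _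
    rw [real_inner_smul_left, real_inner_self_eq_norm_sq]
  have hgux : ip (‖w‖⁻¹ • w) v / ‖mApp Rsq ((‖w‖ : ℝ)⁻¹ • w)‖ = ‖r‖ := by
    rw [hipux, hnux, div_eq_iff (by positivity)]
    ring
  set M : ℝ := (‖r‖ - med ν) / m0 with hM
  have hgle : ∀ u : Vec d, ‖u‖ = 1 →
      (ip u x - med (proj F u)) / mad (proj F u) ≤ M := by
    intro u hu
    rw [key u hu, hM]
    gcongr
    exact hbound u hu
  have huxval : (ip (‖w‖⁻¹ • w) x - med (proj F (‖w‖⁻¹ • w)))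
      / mad (proj F (‖w‖⁻¹ • w)) = M := by
    rw [key _ huxnorm, hgux]
  haveI : Nonempty (sph d) := ⟨⟨_, huxnorm⟩⟩
  have hout : outly F x = M := by
    rw [outly, outlyG]
    apply le_antisymm
    · exact ciSup_le fun u => hgle u.1 u.2
    · have hb : BddAbove (Set.range fun u : sph d =>
          (ip u.1 x - med (proj F u.1)) / mad (proj F u.1)) := by
        refine ⟨M, ?_⟩
        rintro _ ⟨u, rfl⟩
        exact hgle u.1 u.2
      have h7 := le_ciSup hb (⟨‖w‖⁻¹ • w, huxnorm⟩ : sph d)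
      exact le_trans (le_of_eq huxval.symm) h7
  refine ⟨huxnorm, by rw [huxval, hout], ?_, ?_⟩
  · intro u hu hval
    rw [hout, key u hu] at hval
    have h1 : ip u v / ‖mApp Rsq u‖ = ‖r‖ := by
      have h8 := congrArg (· * m0) hval
      simp only [div_mul_cancel₀ _ hm0pos.ne'] at h8
      linarith [show M * m0 = ‖r‖ - med ν by rw [hM, div_mul_cancel₀ _ hm0pos.ne']]
    have h2 : ip (mApp Rsq u) r = ‖mApp Rsq u‖ * ‖r‖ := by
      rw [← hCS u]
      rw [div_eq_iff (hcpos u hu).ne'] at h1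
      rw [h1]
      ring
    have h3 : ‖r‖ • mApp Rsq u = ‖mApp Rsq u‖ • r := inner_eq_norm_mul_iff_real.mp h2
    have h4 : ‖r‖ • u = ‖mApp Rsq u‖ • w := by
      have h9 := congrArg (mApp Rsq⁻¹) h3
      rwa [mApp_smul, mApp_smul, ← mApp_mul, hRinvR, mApp_one, ← hwr] at h9
    have h5 : u = (‖r‖⁻¹ * ‖mApp Rsq u‖) • w := by
      calc u = ‖r‖⁻¹ • (‖r‖ • u) := by
              rw [smul_smul, inv_mul_cancel₀ hrpos.ne', one_smul]
        _ = ‖r‖⁻¹ • (‖mApp Rsq u‖ • w) := by rw [h4]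
        _ = (‖r‖⁻¹ * ‖mApp Rsq u‖) • w := smul_smul _ _ _
    have hcoeff : (‖r‖⁻¹ * ‖mApp Rsq u‖) * ‖w‖ = 1 := by
      have h6 := congrArg norm h5
      rw [hu, norm_smul, Real.norm_eq_abs,
        abs_of_pos (mul_pos (inv_pos.mpr hrpos) (hcpos u hu))] at h6
      linarith
    have hcoeff' : ‖r‖⁻¹ * ‖mApp Rsq u‖ = ‖w‖⁻¹ := eq_inv_of_mul_eq_one_left hcoeff
    rw [h5, hcoeff']
  · rw [hmad _ huxnorm, hnux]
    field_simp


end DWS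
end
end

section
/- Median and MAD of a point-mass contaminated elliptical projection: suppose X ~ F is elliptically symmetric about the origin with positive definite matrix Σ, let a(u) = √(u'Σu), and let ε ∈ [0, 1/2). Then for every unit vector u and every x ∈ ℝ^d: (1) Med((1−ε)F_u + εδ_{u'x}) equals the middle value of the three numbers {−a(u)d_1(ε), u'x, a(u)d_1(ε)}; and (2) writing M = Med((1−ε)F_u + εδ_{u'x}), MAD((1−ε)F_u + εδ_{u'x}) equals the middle value of the three numbers {a(u)·m_1(M/a(u), ε), |u'x − M|, a(u)·m_2(M/a(u), ε)}. -/
open MeasureTheory ProbabilityTheory Matrix Filter Topology Set ENNReal NNReal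

noncomputable section

namespace DWS

variable {d : ℕ}

lemma mid3_eq_max {l r : ℝ} (t : ℝ) (h : l ≤ r) : mid3 l t r = max l (min t r) := by
  unfold mid3
  rcases le_total l t with h1|h1 <;> rcases le_total t r with h2|h2 <;>
    simp_all [min_def, max_def] <;> first | linarith | (split_ifs <;> linarith)

lemma half_le_ofReal_iff {b : ℝ} (hb : 0 ≤ b) :
    (1:ℝ≥0∞)/2 ≤ ENNReal.ofReal b ↔ (1/2 : ℝ) ≤ b := by
  rw [show (1:ℝ≥0∞)/2 = ENNReal.ofReal (1/2) by
    rw [ENNReal.ofReal_div_of_pos (by norm_num)]; norm_num]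
  exact ENNReal.ofReal_le_ofReal_iff hb

lemma med_eq_mid3_of (H : Measure ℝ) (l t r : ℝ) (hlr : l ≤ r)
    (h1 : ∀ s, t ≤ s → ((1:ℝ≥0∞)/2 ≤ H (Set.Iic s) ↔ l ≤ s))
    (h2 : ∀ s, s < t → ((1:ℝ≥0∞)/2 ≤ H (Set.Iic s) ↔ r ≤ s)) :
    med H = mid3 l t r := by
  have hset : {s : ℝ | (1:ℝ≥0∞)/2 ≤ H (Set.Iic s)} = Set.Ici (mid3 l t r) := by
    rw [mid3_eq_max t hlr]
    ext s
    simp only [Set.mem_setOf_eq, Set.mem_Ici, max_le_iff]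
    rcases le_or_gt t s with hts | hts
    · rw [h1 s hts]
      exact ⟨fun h => ⟨h, le_trans (min_le_left _ _) hts⟩, fun h => h.1⟩
    · rw [h2 s hts]
      constructor
      · intro h; exact ⟨le_trans hlr h, le_trans (min_le_right _ _) h⟩
      · rintro ⟨-, h⟩
        rcases le_total r t with hrt | hrt
        · rwa [min_eq_right hrt] at h
        · rw [min_eq_left hrt] at h; linarith
  rw [med, hset, csInf_Ici]

lemma med_contam1_eq (G : Measure ℝ) (ε t l r : ℝ) (hε0 : 0 ≤ ε) (hε2 : ε < 1/2)
    (hlr : l ≤ r) (γ : ℝ → ℝ) (hγ0 : ∀ s, 0 ≤ γ s)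
    (hG : ∀ s, G (Set.Iic s) = ENNReal.ofReal (γ s))
    (Hl : ∀ s, ((1 - 2*ε)/(2*(1-ε)) ≤ γ s ↔ l ≤ s))
    (Hr : ∀ s, (1/(2*(1-ε)) ≤ γ s ↔ r ≤ s)) :
    med (contam1 G ε t) = mid3 l t r := by
  have hε1 : (0:ℝ) < 1 - ε := by linarith
  have happly : ∀ s, contam1 G ε t (Set.Iic s)
      = ENNReal.ofReal ((1-ε) * γ s + ε * (if t ≤ s then 1 else 0)) := by
    intro s
    rw [contam1]
    simp only [Measure.coe_add, Pi.add_apply, Measure.smul_apply, smul_eq_mul,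
      Measure.dirac_apply, Set.indicator_apply, Set.mem_Iic, Pi.one_apply]
    rw [hG, ← ENNReal.ofReal_mul (by linarith)]
    split_ifs with h
    · rw [mul_one, mul_one]
      exact (ENNReal.ofReal_add (mul_nonneg hε1.le (hγ0 s)) hε0).symm
    · rw [mul_zero, mul_zero, add_zero, add_zero]
  apply med_eq_mid3_of _ l t r hlr
  · intro s hs
    rw [happly, if_pos hs, mul_one,
      half_le_ofReal_iff (by have := mul_nonneg hε1.le (hγ0 s); linarith), ← Hl s,
      div_le_iff₀ (show (0:ℝ) < 2*(1-ε) by linarith)]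
    constructor <;> intro h <;> nlinarith [hγ0 s]
  · intro s hs
    rw [happly, if_neg (not_le.mpr hs), mul_zero, add_zero,
      half_le_ofReal_iff (mul_nonneg hε1.le (hγ0 s)), ← Hr s,
      div_le_iff₀ (show (0:ℝ) < 2*(1-ε) by linarith)]
    constructor <;> intro h <;> nlinarith [hγ0 s]

variable {ν : Measure ℝ} {p : ℝ → ℝ}

lemma nu_Ioc_pos (hpc : Continuous p)
    (hdens : ν = (volume : Measure ℝ).withDensity fun y => ENNReal.ofReal (p y))
    (hppos : ∀ y, 0 < p y) {y z : ℝ} (h : y < z) : 0 < ν (Set.Ioc y z) := by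
  rw [hdens, pos_iff_ne_zero]
  intro h0
  rw [withDensity_apply_eq_zero (by fun_prop)] at h0
  have hset : {x | (ENNReal.ofReal (p x)) ≠ 0} = Set.univ := by
    ext x
    simp [ENNReal.ofReal_eq_zero, not_le, hppos x]
  rw [hset, Set.univ_inter, Real.volume_Ioc, ENNReal.ofReal_eq_zero] at h0
  linarith

lemma cdf_strictMono [IsProbabilityMeasure ν] (hpc : Continuous p)
    (hdens : ν = (volume : Measure ℝ).withDensity fun y => ENNReal.ofReal (p y))
    (hppos : ∀ y, 0 < p y) :
    StrictMono fun y => (ν (Set.Iic y)).toReal := by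
  intro y z h
  have hm : ν (Set.Iic y) + ν (Set.Ioc y z) = ν (Set.Iic z) := by
    rw [← measure_union (Set.Iic_disjoint_Ioc le_rfl) measurableSet_Ioc,
      Set.Iic_union_Ioc_eq_Iic h.le]
  have hpos : 0 < ν (Set.Ioc y z) := nu_Ioc_pos hpc hdens hppos h
  simp only
  rw [← hm, ENNReal.toReal_add (measure_ne_top _ _) (measure_ne_top _ _)]
  have : 0 < (ν (Set.Ioc y z)).toReal :=
    ENNReal.toReal_pos hpos.ne' (measure_ne_top _ _)
  linarith

lemma nu_singleton (hdens : ν = (volume : Measure ℝ).withDensity fun y => ENNReal.ofReal (p y))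
    (y : ℝ) : ν {y} = 0 := by
  rw [hdens]
  exact (withDensity_absolutelyContinuous _ _) (Real.volume_singleton)

lemma nu_Iio (hdens : ν = (volume : Measure ℝ).withDensity fun y => ENNReal.ofReal (p y))
    (y : ℝ) : ν (Set.Iio y) = ν (Set.Iic y) := by
  rw [← Set.Iio_union_right, measure_union (by simp) (measurableSet_singleton y),
    nu_singleton hdens, add_zero]

lemma cdf_zero_half [IsProbabilityMeasure ν] (hνsym : ν.map (fun y => -y) = ν)
    (hdens : ν = (volume : Measure ℝ).withDensity fun y => ENNReal.ofReal (p y)) :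
    (ν (Set.Iic 0)).toReal = 1/2 := by
  have h2 : ν (Set.Ioi 0) = ν (Set.Iic 0) := by
    conv_lhs => rw [← hνsym]
    rw [Measure.map_apply measurable_neg measurableSet_Ioi]
    have : (fun y : ℝ => -y) ⁻¹' Set.Ioi 0 = Set.Iio 0 := by
      ext w; simp
    rw [this, nu_Iio hdens]
  have h1 : ν (Set.Iic 0) + ν (Set.Ioi 0) = 1 := by
    rw [← measure_union (Set.Iic_disjoint_Ioi le_rfl) measurableSet_Ioi,
      Set.Iic_union_Ioi, measure_univ]
  rw [h2] at h1
  have hfin := measure_ne_top ν (Set.Iic 0)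
  have := ENNReal.toReal_add (a := ν (Set.Iic 0)) (b := ν (Set.Iic 0)) hfin hfin
  rw [h1] at this
  simp at this
  linarith

lemma cdf_neg [IsProbabilityMeasure ν] (hνsym : ν.map (fun y => -y) = ν)
    (hdens : ν = (volume : Measure ℝ).withDensity fun y => ENNReal.ofReal (p y))
    (c : ℝ) : (ν (Set.Iic (-c))).toReal = 1 - (ν (Set.Iic c)).toReal := by
  have h2 : ν (Set.Iic (-c)) = ν (Set.Ici c) := by
    conv_lhs => rw [← hνsym]
    rw [Measure.map_apply measurable_neg measurableSet_Iic]
    congr 1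
    ext w; simp
  have h1 : ν (Set.Iio c) + ν (Set.Ici c) = 1 := by
    rw [← measure_union (Set.Iio_disjoint_Ici le_rfl) measurableSet_Ici,
      Set.Iio_union_Ici, measure_univ]
  rw [nu_Iio hdens] at h1
  have hfin := measure_ne_top ν (Set.Iic c)
  have hfin2 := measure_ne_top ν (Set.Ici c)
  have := ENNReal.toReal_add hfin hfin2
  rw [h1] at this
  simp only [ENNReal.toReal_one] at this
  rw [h2]
  linarith

lemma psi_le_iff [IsProbabilityMeasure ν] (hpc : Continuous p)
    (hdens : ν = (volume : Measure ℝ).withDensity fun y => ENNReal.ofReal (p y))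
    (hppos : ∀ y, 0 < p y) (c q s0 : ℝ) (hq : 0 < q) (hs0 : 0 ≤ s0)
    (hval : (ν {y | |y - c| ≤ s0}).toReal = q) (s : ℝ) :
    q ≤ (ν {y | |y - c| ≤ s}).toReal ↔ s0 ≤ s := by
  have hmono : ∀ s1 s2 : ℝ, 0 ≤ s1 → s1 < s2 →
      (ν {y | |y - c| ≤ s1}).toReal < (ν {y | |y - c| ≤ s2}).toReal := by
    intro s1 s2 h1 h12
    have hsub : {y | |y - c| ≤ s1} ∪ Set.Ioc (c + s1) (c + s2) ⊆ {y | |y - c| ≤ s2} := by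
      rintro y (hy | hy)
      · exact le_trans hy h12.le
      · have h3 : c + s1 < y := hy.1
        have h4 : y ≤ c + s2 := hy.2
        have : |y - c| = y - c := abs_of_nonneg (by linarith)
        simp only [Set.mem_setOf_eq, this]
        linarith
    have hdisj : Disjoint {y | |y - c| ≤ s1} (Set.Ioc (c + s1) (c + s2)) := by
      rw [Set.disjoint_left]
      intro y hy hy2
      have hy' : |y - c| ≤ s1 := hy
      have h3 := (abs_le.mp hy').2
      have h4 := hy2.1
      linarith
    have hm := measure_union (μ := ν) hdisj measurableSet_Ioc
    have hle : ν {y | |y - c| ≤ s1} + ν (Set.Ioc (c + s1) (c + s2))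
        ≤ ν {y | |y - c| ≤ s2} := hm ▸ measure_mono hsub
    have hpos : 0 < ν (Set.Ioc (c + s1) (c + s2)) :=
      nu_Ioc_pos hpc hdens hppos (by linarith)
    have hR := (ENNReal.toReal_le_toReal
      (by exact (lt_of_le_of_lt hle (lt_of_le_of_lt (measure_mono (Set.subset_univ _))
        (by simpa using ENNReal.one_lt_top))).ne) (measure_ne_top _ _)).mpr hle
    rw [ENNReal.toReal_add (measure_ne_top _ _) (measure_ne_top _ _)] at hR
    have : 0 < (ν (Set.Ioc (c + s1) (c + s2))).toReal :=
      ENNReal.toReal_pos hpos.ne' (measure_ne_top _ _)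
    linarith
  rcases lt_or_ge s 0 with hs | hs
  · have hempty : {y | |y - c| ≤ s} = (∅ : Set ℝ) := by
      ext y
      simp only [Set.mem_setOf_eq, Set.mem_empty_iff_false, iff_false, not_le]
      exact lt_of_lt_of_le hs (abs_nonneg _)
    rw [hempty]
    simp only [measure_empty, ENNReal.toReal_zero]
    constructor <;> intro h <;> linarith
  · constructor
    · intro h
      by_contra hlt
      push_neg at hlt
      have := hmono s s0 hs hlt
      rw [hval] at this
      linarith
    · intro h
      rcases eq_or_lt_of_le h with he | hlt
      · rw [← he, hval]
      · have := hmono s0 s hs0 hlt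
        rw [hval] at this
        linarith


/-- Median and MAD of a point-mass contaminated elliptical projection. -/
theorem med_mad_contaminated_projection {d : ℕ}
    (hd : 0 < d) (Sig : Mat d) (hSig : Sig.PosDef)
    (ν : Measure ℝ) [IsProbabilityMeasure ν]
    (hνsym : ν.map (fun y => -y) = ν)
    (p : ℝ → ℝ) (hpc : Continuous p)
    (hdens : ν = (volume : Measure ℝ).withDensity fun y => ENNReal.ofReal (p y))
    (hppos : ∀ y : ℝ, 0 < p y)
    (F : Measure (Vec d)) [IsProbabilityMeasure F]
    (hell : ∀ u : Vec d, ‖u‖ = 1 →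
      F.map (fun x => ip u x) = ν.map (fun y => Real.sqrt (qf Sig u) * y))
    (ε : ℝ) (hε : ε ∈ Set.Ico (0:ℝ) (1/2))
    (d1 : ℝ) (hd1 : ν (Set.Iic d1) = ENNReal.ofReal (1 / (2 * (1 - ε))))
    (m1 m2 : ℝ → ℝ)
    (hm1 : ∀ c : ℝ, ν {y | |y - c| ≤ m1 c} = ENNReal.ofReal ((1 - 2 * ε) / (2 * (1 - ε))))
    (hm2 : ∀ c : ℝ, ν {y | |y - c| ≤ m2 c} = ENNReal.ofReal (1 / (2 * (1 - ε)))) :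
    ∀ u : Vec d, ‖u‖ = 1 → ∀ x : Vec d, ∀ a : ℝ, a = Real.sqrt (qf Sig u) →
      med (contam1 (proj F u) ε (ip u x)) = mid3 (-(a * d1)) (ip u x) (a * d1)
      ∧ ∀ M : ℝ, M = med (contam1 (proj F u) ε (ip u x)) →
          mad (contam1 (proj F u) ε (ip u x)) =
            mid3 (a * m1 (M / a)) |ip u x - M| (a * m2 (M / a)) := by
  intro u hu x a ha
  have hε0 : (0:ℝ) ≤ ε := hε.1
  have hε2 : ε < 1/2 := hε.2
  have hε1 : (0:ℝ) < 1 - ε := by linarith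
  -- positivity of a
  have hu0 : (fun i => u i) ≠ (0 : Fin d → ℝ) := by
    intro h0
    have : u = 0 := by
      ext i
      exact congrFun h0 i
    rw [this, norm_zero] at hu
    norm_num at hu
  have hq : 0 < qf Sig u := by
    have hpd := hSig.dotProduct_mulVec_pos hu0
    simp only [RCLike.re_to_real] at hpd
    have heq : (fun i => u i) ⬝ᵥ Sig.mulVec (fun i => u i) = qf Sig u := by
      rw [qf, dotProduct]
      apply Finset.sum_congr rfl
      intro i _
      rw [Matrix.mulVec, dotProduct, Finset.mul_sum]
      apply Finset.sum_congr rfl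
      intro j _
      ring
    calc (0:ℝ) < _ := hpd
    _ = qf Sig u := by rw [← heq]; norm_num [dotProduct]
  have ha0 : 0 < a := ha ▸ Real.sqrt_pos.mpr hq
  -- CDF facts
  set φ : ℝ → ℝ := fun y => (ν (Set.Iic y)).toReal with hφdef
  have hφmono : StrictMono φ := cdf_strictMono hpc hdens hppos
  have hhalf : φ 0 = 1/2 := cdf_zero_half hνsym hdens
  have hd1R : φ d1 = 1/(2*(1-ε)) := by
    rw [hφdef]
    simp only
    rw [hd1, ENNReal.toReal_ofReal (by positivity)]
  have hd1nn : 0 ≤ d1 := by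
    have h12 : φ 0 ≤ φ d1 := by
      rw [hhalf, hd1R, le_div_iff₀ (by linarith)]
      linarith
    exact hφmono.le_iff_le.mp h12
  have hφneg : φ (-d1) = (1-2*ε)/(2*(1-ε)) := by
    rw [hφdef]
    simp only
    rw [cdf_neg hνsym hdens]
    rw [show (ν (Set.Iic d1)).toReal = φ d1 from rfl, hd1R]
    field_simp
    ring
  -- law of the projection
  have hmap : F.map (fun x => ip u x) = ν.map (fun y => a * y) := by
    rw [ha]; exact hell u hu
  have hGIic : ∀ s, proj F u (Set.Iic s) = ENNReal.ofReal (φ (s/a)) := by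
    intro s
    rw [proj, hmap, Measure.map_apply (by fun_prop) measurableSet_Iic]
    have hpre : (fun y => a * y) ⁻¹' Set.Iic s = Set.Iic (s/a) := by
      ext y
      simp only [Set.mem_preimage, Set.mem_Iic]
      rw [le_div_iff₀ ha0, mul_comm]
    rw [hpre, hφdef]
    exact (ENNReal.ofReal_toReal (measure_ne_top _ _)).symm
  constructor
  · -- median
    apply med_contam1_eq (proj F u) ε (ip u x) (-(a*d1)) (a*d1) hε0 hε2
      (by nlinarith) (fun s => φ (s/a)) (fun s => ENNReal.toReal_nonneg) hGIic
    · intro s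
      rw [← hφneg, hφmono.le_iff_le, le_div_iff₀ ha0]
      constructor <;> intro h <;> nlinarith
    · intro s
      rw [← hd1R, hφmono.le_iff_le, le_div_iff₀ ha0]
      constructor <;> intro h <;> nlinarith
  · -- MAD
    intro M hM
    set t := ip u x with ht
    set c := M / a with hc
    set ψ : ℝ → ℝ := fun s => (ν {y | |y - c| ≤ s}).toReal with hψdef
    have hq1 : (0:ℝ) < (1 - 2*ε)/(2*(1-ε)) := by
      apply div_pos <;> linarith
    have hq2 : (0:ℝ) < 1/(2*(1-ε)) := by
      apply div_pos <;> linarith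
    have hψm1 : ψ (m1 c) = (1 - 2*ε)/(2*(1-ε)) := by
      rw [hψdef]
      simp only
      rw [show (1:ℝ) - 2*ε = 1 - 2*ε from rfl]
      rw [show ν {y | |y - c| ≤ m1 c} = ENNReal.ofReal ((1 - 2 * ε) / (2 * (1 - ε))) from hm1 c,
        ENNReal.toReal_ofReal hq1.le]
    have hψm2 : ψ (m2 c) = 1/(2*(1-ε)) := by
      rw [hψdef]
      simp only
      rw [hm2 c, ENNReal.toReal_ofReal hq2.le]
    have hm1nn : 0 ≤ m1 c := by
      by_contra hneg
      push_neg at hneg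
      have hempty : {y : ℝ | |y - c| ≤ m1 c} = ∅ := by
        ext y
        simp only [Set.mem_setOf_eq, Set.mem_empty_iff_false, iff_false, not_le]
        exact lt_of_lt_of_le hneg (abs_nonneg _)
      have := hm1 c
      rw [hempty, measure_empty] at this
      rw [eq_comm, ENNReal.ofReal_eq_zero] at this
      linarith
    have hm2nn : 0 ≤ m2 c := by
      by_contra hneg
      push_neg at hneg
      have hempty : {y : ℝ | |y - c| ≤ m2 c} = ∅ := by
        ext y
        simp only [Set.mem_setOf_eq, Set.mem_empty_iff_false, iff_false, not_le]
        exact lt_of_lt_of_le hneg (abs_nonneg _)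
      have := hm2 c
      rw [hempty, measure_empty] at this
      rw [eq_comm, ENNReal.ofReal_eq_zero] at this
      linarith
    have Hψ1 : ∀ s, ((1 - 2*ε)/(2*(1-ε)) ≤ ψ s ↔ m1 c ≤ s) := fun s =>
      psi_le_iff hpc hdens hppos c _ (m1 c) hq1 hm1nn hψm1 s
    have Hψ2 : ∀ s, (1/(2*(1-ε)) ≤ ψ s ↔ m2 c ≤ s) := fun s =>
      psi_le_iff hpc hdens hppos c _ (m2 c) hq2 hm2nn hψm2 s
    have hm12 : m1 c ≤ m2 c := by
      apply (Hψ1 (m2 c)).mp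
      rw [hψm2]
      exact (div_le_div_iff_of_pos_right (show (0:ℝ) < 2*(1-ε) by linarith)).mpr (by linarith)
    -- map equality
    have hf : Measurable fun w : ℝ => |w - M| := by fun_prop
    have hmap2 : (contam1 (proj F u) ε t).map (fun w => |w - M|)
        = contam1 (ν.map (fun y => |a*y - M|)) ε (|t - M|) := by
      rw [contam1, contam1, Measure.map_add _ _ hf, Measure.map_smul, Measure.map_smul,
        Measure.map_dirac' hf]
      congr 2
      rw [proj, hmap, Measure.map_map hf (by fun_prop)]
      rfl
    have hG'Iic : ∀ s, (ν.map (fun y => |a*y - M|)) (Set.Iic s)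
        = ENNReal.ofReal (ψ (s/a)) := by
      intro s
      rw [Measure.map_apply (by fun_prop) measurableSet_Iic]
      have hpre : (fun y => |a*y - M|) ⁻¹' Set.Iic s = {y | |y - c| ≤ s/a} := by
        ext y
        simp only [Set.mem_preimage, Set.mem_Iic, Set.mem_setOf_eq]
        have h1 : |a*y - M| = a * |y - c| := by
          rw [show a*y - M = a*(y - c) by rw [hc, mul_sub, mul_div_cancel₀ _ ha0.ne'],
            abs_mul, abs_of_pos ha0]
        rw [h1, mul_comm, ← le_div_iff₀ ha0]
      rw [hpre, hψdef]
      exact (ENNReal.ofReal_toReal (measure_ne_top _ _)).symm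
    rw [mad, ← hM, hmap2]
    apply med_contam1_eq _ ε _ (a * m1 c) (a * m2 c) hε0 hε2
      (mul_le_mul_of_nonneg_left hm12 ha0.le) (fun s => ψ (s/a))
      (fun s => ENNReal.toReal_nonneg) hG'Iic
    · intro s
      rw [Hψ1 (s/a), le_div_iff₀ ha0, mul_comm]
    · intro s
      rw [Hψ2 (s/a), le_div_iff₀ ha0, mul_comm]

end DWS
end
end

section
/- Fisher consistency of the depth weighted mean under central symmetry: if the depth function D is affine invariant, F is centrally symmetric about θ ∈ ℝ^d (i.e., X − θ and θ − X have the same distribution for X ~ F), and E‖X‖ < ∞, then L(F) = θ. -/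
open MeasureTheory ProbabilityTheory Matrix Filter Topology Set ENNReal NNReal

noncomputable section

namespace DWS

variable {d : ℕ}

/-- Fisher consistency of the depth weighted mean under central
symmetry. -/
theorem fisher_consistency_depth_weighted_mean {d : ℕ}
    (F : Measure (Vec d)) [IsProbabilityMeasure F]
    (D : Vec d → Measure (Vec d) → ℝ)
    (hD01 : ∀ (x : Vec d) (G : Measure (Vec d)), D x G ∈ Set.Icc (0:ℝ) 1)
    (hDcont : ∀ G : Measure (Vec d), Continuous fun x => D x G)
    (hinv : ∀ A : Mat d, IsUnit A.det → ∀ b x : Vec d,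
      D (mApp A x + b) (F.map fun z => mApp A z + b) = D x F)
    (w1 : ℝ → ℝ)
    (hpos : 0 < ∫ x, w1 (D x F) ∂F)
    (hint : Integrable (fun x => w1 (D x F) • x) F)
    (θ : Vec d)
    (hsymm : F.map (fun x => x - θ) = F.map (fun x => θ - x))
    (hE : Integrable (fun x => ‖x‖) F) :
    wMean w1 D F = θ := by
  have hw1int : Integrable (fun x => w1 (D x F)) F := by
    by_contra h
    rw [integral_undef h] at hpos
    exact lt_irrefl 0 hpos
  set T : Vec d → Vec d := fun x => (2:ℝ) • θ - x with hT
  have hTme : MeasurableEmbedding T :=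
    (Homeomorph.subLeft ((2:ℝ) • θ)).measurableEmbedding
  have hF : F.map T = F := by
    have h1 : Measurable fun x : Vec d => x - θ := measurable_id.sub measurable_const
    have h2 : Measurable fun x : Vec d => θ - x := measurable_const.sub measurable_id
    have h3 : Measurable fun y : Vec d => y + θ := measurable_id.add measurable_const
    have hcomp := congrArg (fun μ : Measure (Vec d) => μ.map fun y : Vec d => y + θ) hsymm
    simp only [Measure.map_map h3 h1, Measure.map_map h3 h2] at hcomp
    have e1 : ((fun y : Vec d => y + θ) ∘ fun x => x - θ) = id := by
      funext x; simp
    have e2 : ((fun y : Vec d => y + θ) ∘ fun x => θ - x) = T := by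
      funext x; simp [hT, two_smul]; abel
    rw [e1, e2, Measure.map_id] at hcomp
    exact hcomp.symm
  have hA : IsUnit ((-1 : Mat d)).det := by
    rw [show (-1 : Mat d) = -(1 : Mat d) from rfl, Matrix.det_neg, Matrix.det_one, mul_one]
    exact (IsUnit.neg (isUnit_one : IsUnit (1:ℝ))).pow _
  have hmApp : ∀ x : Vec d, mApp (-1 : Mat d) x = -x := by
    intro x
    ext i
    simp [mApp, Matrix.neg_mulVec, Matrix.one_mulVec]
  have hfun : (fun z : Vec d => mApp (-1 : Mat d) z + (2:ℝ) • θ) = T := by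
    funext z
    rw [hmApp, hT]
    simp [neg_add_eq_sub]
  have hDsym : ∀ x : Vec d, D (T x) F = D x F := by
    intro x
    have h := hinv (-1) hA ((2:ℝ) • θ) x
    rw [show mApp (-1 : Mat d) x + (2:ℝ) • θ = T x from congrFun hfun x, hfun, hF] at h
    exact h
  have key : ∫ x, w1 (D x F) • x ∂F = ∫ x, w1 (D x F) • (T x) ∂F := by
    have step := hTme.integral_map (μ := F) (g := fun x => w1 (D x F) • x)
    rw [hF] at step
    rw [step]
    congr 1
    funext x
    rw [hDsym x]
  set c : ℝ := ∫ x, w1 (D x F) ∂F with hc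
  set I : Vec d := ∫ x, w1 (D x F) • x ∂F with hI
  have hsplit : ∫ x, w1 (D x F) • (T x) ∂F = c • ((2:ℝ) • θ) - I := by
    have heq : (fun x => w1 (D x F) • (T x)) =
        fun x => w1 (D x F) • ((2:ℝ) • θ) - w1 (D x F) • x := by
      funext x; simp [hT, smul_sub]
    rw [heq, integral_sub (hw1int.smul_const _) hint, integral_smul_const, ← hc, ← hI]
  have hIeq : I = c • ((2:ℝ) • θ) - I := key.trans hsplit
  have h2I : (2:ℝ) • I = (2:ℝ) • (c • θ) := by
    have := (eq_sub_iff_add_eq.mp hIeq)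
    rw [← two_smul ℝ I] at this
    rw [this, smul_comm]
  have hIfinal : I = c • θ := smul_right_injective _ (two_ne_zero) h2I
  show c⁻¹ • I = θ
  rw [hIfinal, smul_smul, inv_mul_cancel₀ (ne_of_gt hpos), one_smul]

end DWS
end
end
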